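/- Assume the dewetting condition. Set Δ := min{Δ_strip/6, c_F}, which is strictly positive. Then for every n ∈ ℕ and every configuration D_n ∈ C_n: V_n(D_n) ≥ −6c_F n + Δ · #∂D_n. -/

import Mathlib

open scoped BigOperators Classical Topology ENNReal
open Filter MeasureTheory

noncomputable section

/-!
Common setting: film lattice `L_F` with parameter `e_F = 1`, substrate spacing
`e_S = q/p` (`p, q` coprime positive integers), Heitmann–Radin potentials and the
configurational energy `V_n` (with values in `EReal`, since the Heitmann–Radin
potential takes the value `+∞` below distance `1`).
-/

/-- Points of the plane. -/
abbrev Pt : Type := ℝ × ℝ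

/-- The lattice vector `t₁ = (1,0)`. -/
def t1 : Pt := ((1 : ℝ), (0 : ℝ))

/-- The lattice vector `t₂ = (1/2, √3/2)`. -/
def t2 : Pt := ((1 / 2 : ℝ), Real.sqrt 3 / 2)

/-- Euclidean distance on `ℝ × ℝ`. -/
def dE (x y : Pt) : ℝ := Real.sqrt ((x.1 - y.1) ^ 2 + (x.2 - y.2) ^ 2)

/-- Substrate lattice spacing `e_S = q / p`. -/
def eS (p q : ℕ) : ℝ := (q : ℝ) / (p : ℝ)

/-- The film lattice `L_F = {(0, e_S) + k₁ t₁ + k₂ t₂ : k₁ ∈ ℤ, k₂ ∈ ℕ ∪ {0}}`. -/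
def LF (p q : ℕ) : Set Pt :=
  {x | ∃ (k₁ : ℤ) (k₂ : ℕ), x = (((0 : ℝ), eS p q) : Pt) + (k₁ : ℝ) • t1 + (k₂ : ℝ) • t2}

/-- The set `∂L_{FS} = {(k q, e_S) : k ∈ ℤ}` of lower-boundary film sites lying at
distance `e_S` above a substrate atom. -/
def bLFS (p q : ℕ) : Set Pt := {x | ∃ k : ℤ, x = (((k : ℝ) * (q : ℝ), eS p q) : Pt)}

/-- Crystalline configurations with `n` atoms: subsets of `L_F` of cardinality `n`. -/
def Cn (p q n : ℕ) : Set (Finset Pt) := {D | ↑D ⊆ LF p q ∧ D.card = n}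

/-- The Heitmann–Radin sticky-disc potential: `+∞` for `r < 1`, `-c_F` at `r = 1`,
`0` for `r > 1`. -/
def vF (cF : ℝ) (r : ℝ) : EReal :=
  if r < 1 then (⊤ : EReal) else if r = 1 then ((-cF : ℝ) : EReal) else (0 : EReal)

/-- The one-body substrate potential `v¹`: `-c_S` on `∂L_{FS}`, `0` otherwise. -/
def v1 (cS : ℝ) (p q : ℕ) (x : Pt) : ℝ := if x ∈ bLFS p q then -cS else 0

/-- The total energy `V_n(D) = Σ_{(x,y) ∈ D×D, x ≠ y} v_F(|x-y|) + Σ_{x ∈ D} v¹(x)`. -/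
def Vn (cF cS : ℝ) (p q : ℕ) (D : Finset Pt) : EReal :=
  (∑ e ∈ D.offDiag, vF cF (dE e.1 e.2)) + (((∑ x ∈ D, v1 cS p q x) : ℝ) : EReal)

/-- The dewetting condition: `c_S < 4c_F` if `q = 1` and `c_S < 6c_F` if `q ≠ 1`. -/
def Dewetting (cF cS : ℝ) (q : ℕ) : Prop := if q = 1 then cS < 4 * cF else cS < 6 * cF

/-- The boundary `∂D` of a configuration: atoms with fewer than `6` film neighbours. -/
def bdry (D : Finset Pt) : Finset Pt :=
  D.filter fun x => (D.filter fun y => dE x y = 1).card < 6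

/-- The empirical measure `μ_{D_n} = (1/n) Σ_{x ∈ D_n} δ_{x/√n}`. -/
def emp (n : ℕ) (D : Finset Pt) : Measure Pt :=
  ((n : ℝ≥0∞))⁻¹ • ∑ x ∈ D, Measure.dirac (((Real.sqrt n)⁻¹ : ℝ) • x)

/-- A configuration of `n` consecutive sites `{w, w + t₁, …, w + (n-1) t₁}` on `∂L_{FS}`. -/
def IsConsecutive (p q n : ℕ) (Dw : Finset Pt) : Prop :=
  ∃ w : Pt, w ∈ bLFS p q ∧ Dw = (Finset.range n).image fun i => w + (i : ℝ) • t1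

/-- Two atoms joined by a chain of atoms of `D` with consecutive distances `1`. -/
def chainConn (D : Finset Pt) (x y : Pt) : Prop :=
  Relation.ReflTransGen (fun a b => a ∈ D ∧ b ∈ D ∧ dE a b = 1) x y

/-- Connectedness of a configuration. -/
def IsConnectedConf (D : Finset Pt) : Prop := ∀ x ∈ D, ∀ y ∈ D, chainConn D x y

/-- `C` is a connected component of `D` (the set of atoms of `D` chain-connected to
some atom of `D`). -/
def IsComponent (D C : Finset Pt) : Prop :=
  ∃ x ∈ D, ∀ y : Pt, y ∈ C ↔ y ∈ D ∧ chainConn D x y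

/-- Almost-connectedness: connected if `q = 1`; if `q ≠ 1`, the connected components
can be enumerated so that each one is at distance at most `q` from the union of the
previous ones. -/
def AlmostConnected (q : ℕ) (D : Finset Pt) : Prop :=
  if q = 1 then IsConnectedConf D
  else
    ∃ (k : ℕ) (f : Fin k → Finset Pt),
      Function.Injective f ∧
      (∀ i, IsComponent D (f i)) ∧
      (∀ C : Finset Pt, IsComponent D C → ∃ i, C = f i) ∧
      (∀ i : Fin k, 1 ≤ (i : ℕ) →
        ∃ x ∈ f i, ∃ j : Fin k, j < i ∧ ∃ y ∈ f j, dE x y ≤ (q : ℝ))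

/-- Local energy `E_loc(x)` of a site with respect to the configuration `D`. -/
def Eloc (cF : ℝ) (D : Finset Pt) (x : Pt) : ℝ :=
  if x ∈ D then cF * (6 - ((D.filter fun y => dE x y = 1).card : ℝ)) else 0

/-- Height `y_M` of the topmost atom of `D` in the column of `x`. -/
def yM (D : Finset Pt) (x : Pt) : ℝ := sSup {y : ℝ | ((x.1, y) : Pt) ∈ D}

/-- The strip top `x̃ = (x¹, y_M)`. -/
def til (D : Finset Pt) (x : Pt) : Pt := (x.1, yM D x)

/-- The weight `w₊(x̃)`. -/
def wPlus (p q : ℕ) (D : Finset Pt) (x : Pt) : ℝ :=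
  if x + t1 ∈ D ∧ x + t1 ∈ bLFS p q ∧ til D x + t2 = til D (x + t1) + t2 - t1 then 1 / 2 else 1

/-- The weight `w₋(x̃)`. -/
def wMinus (p q : ℕ) (D : Finset Pt) (x : Pt) : ℝ :=
  if x - t1 ∈ D ∧ x - t1 ∈ bLFS p q ∧ til D x + t2 - t1 = til D (x - t1) + t2 then 1 / 2 else 1

/-- Lower strip energy `E_strip,below(x)`. -/
def EStripBelow (cF cS : ℝ) (p q : ℕ) (D : Finset Pt) (x : Pt) : ℝ :=
  if q = 1 then
    (1 / 2) * Eloc cF D x + (1 / 4) * Eloc cF D (x + t1) + (1 / 4) * Eloc cF D (x - t1) - cS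
  else
    Eloc cF D x + (1 / 2) * Eloc cF D (x + t1) + (1 / 2) * Eloc cF D (x - t1) - cS

/-- Upper strip energy `E_strip,above(x)`. -/
def EStripAbove (cF : ℝ) (p q : ℕ) (D : Finset Pt) (x : Pt) : ℝ :=
  (if til D x ≠ x then Eloc cF D (til D x) else 0) +
    wPlus p q D x * Eloc cF D (til D x + t2) +
    wMinus p q D x * Eloc cF D (til D x + t2 - t1)

/-- The strip energy `E_strip(x) = E_strip,below(x) + E_strip,above(x)`. -/
def EStrip (cF cS : ℝ) (p q : ℕ) (D : Finset Pt) (x : Pt) : ℝ :=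
  EStripBelow cF cS p q D x + EStripAbove cF p q D x

/-- `Δ_strip`: `4c_F - c_S` if `q = 1`, `6c_F - c_S` if `q ≠ 1`. -/
def DeltaStrip (cF cS : ℝ) (q : ℕ) : ℝ := if q = 1 then 4 * cF - cS else 6 * cF - cS

/-- The union `S(∂L_{FS})` of all strips of the configuration `D`. -/
def SLFS (p q : ℕ) (D : Finset Pt) : Finset Pt :=
  D.filter fun y => ∃ x, x ∈ D ∧ x ∈ bLFS p q ∧
    (y = x ∨ y = x + t1 ∨ y = x - t1 ∨ y = til D x ∨ y = til D x + t2 ∨ y = til D x + t2 - t1)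

/-- The rescaled energy `E_n(μ_{D_n}) = n^{-1/2} (V_n(D_n) + 6 c_F n)`. -/
def En (cF cS : ℝ) (p q n : ℕ) (D : Finset Pt) : EReal :=
  ((((Real.sqrt n)⁻¹ : ℝ)) : EReal) * (Vn cF cS p q D + ((6 * cF * (n : ℝ) : ℝ) : EReal))

/-!
Write `V_n(D) = -6 c_F n + c_F B - c_S s`, where `B` counts the broken bonds of `D` (an atom
together with a lattice direction in which its neighbouring site is empty) and `s` counts the atoms
on `∂L_{FS}`. A boundary atom breaks at least one bond, so `#∂D ≤ B`. Each atom on `∂L_{FS}` can be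
charged injectively with broken bonds: the two pointing into the substrate, and the two leaving the
top ends of the lattice lines through it in the directions `t₂` and `t₂ - t₁`; if `q ≠ 1`, also
one on each horizontal side, namely its own bond towards an empty neighbour or else the bond into
the substrate of the occupied neighbour, which is not on `∂L_{FS}`. Hence `4 s ≤ B`, or `6 s ≤ B`
when `q ≠ 1`, and the dewetting condition turns this into `c_S s ≤ (c_F - Δ) B`.
-/

open Finset

section Lattice

def latVec (m : ℤ × ℤ) : Pt := (m.1 : ℝ) • t1 + (m.2 : ℝ) • t2

@[simp] lemma latVec_fst (m : ℤ × ℤ) : (latVec m).1 = m.1 + m.2 / 2 := by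
  simp [latVec, t1, t2, div_eq_mul_inv]

@[simp] lemma latVec_snd (m : ℤ × ℤ) : (latVec m).2 = m.2 * (√3 / 2) := by
  simp [latVec, t1, t2]

lemma latVec_injective : Function.Injective latVec := by
  intro m m' h
  have h2 : (m.2 : ℝ) = m'.2 := by
    simpa [(by positivity : (0:ℝ) < √3).ne'] using congrArg Prod.snd h
  have h1 : (m.1 : ℝ) = m'.1 := by simpa [h2] using congrArg Prod.fst h
  exact Prod.ext (by exact_mod_cast h1) (by exact_mod_cast h2)

lemma exists_eq_add_latVec {p q : ℕ} {x y : Pt} (hx : x ∈ LF p q) (hy : y ∈ LF p q) :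
    ∃ m : ℤ × ℤ, y = x + latVec m := by
  obtain ⟨a, b, rfl⟩ := hx
  obtain ⟨a', b', rfl⟩ := hy
  refine ⟨(a' - a, (b' : ℤ) - b), ?_⟩
  simp only [latVec]
  push_cast
  module

lemma eS_le_snd {p q : ℕ} {x : Pt} (hx : x ∈ LF p q) : eS p q ≤ x.2 := by
  obtain ⟨a, b, rfl⟩ := hx
  simp only [Prod.snd_add, Prod.smul_snd, t1, t2, smul_eq_mul]
  nlinarith [Real.sqrt_nonneg 3, (b.cast_nonneg : (0:ℝ) ≤ b)]

lemma dE_add_latVec (x : Pt) (m : ℤ × ℤ) :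
    dE x (x + latVec m) = √((m.1 ^ 2 + m.1 * m.2 + m.2 ^ 2 : ℤ) : ℝ) := by
  simp only [dE, Prod.fst_add, Prod.snd_add, latVec_fst, latVec_snd]
  congr 1
  push_cast
  linear_combination ((m.2 : ℝ) ^ 2 / 4) * Real.sq_sqrt (show (0:ℝ) ≤ 3 by norm_num)

def unitVecs : Finset (ℤ × ℤ) := {(1, 0), (-1, 0), (0, 1), (0, -1), (-1, 1), (1, -1)}

lemma mem_unitVecs_iff (m : ℤ × ℤ) : m ∈ unitVecs ↔ m.1 ^ 2 + m.1 * m.2 + m.2 ^ 2 = 1 := by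
  obtain ⟨a, b⟩ := m
  constructor
  · simp only [unitVecs, mem_insert, mem_singleton, Prod.mk.injEq]
    rintro (⟨rfl, rfl⟩ | ⟨rfl, rfl⟩ | ⟨rfl, rfl⟩ | ⟨rfl, rfl⟩ | ⟨rfl, rfl⟩ | ⟨rfl, rfl⟩) <;>
      norm_num
  · intro h
    have hb : b ^ 2 ≤ 1 := by nlinarith [sq_nonneg (2 * a + b)]
    have ha : a ^ 2 ≤ 1 := by nlinarith [sq_nonneg (a + 2 * b)]
    obtain ⟨ha₁, ha₂⟩ := abs_le.mp ((sq_le_one_iff_abs_le_one a).mp ha)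
    obtain ⟨hb₁, hb₂⟩ := abs_le.mp ((sq_le_one_iff_abs_le_one b).mp hb)
    interval_cases a <;> interval_cases b <;> simp_all [unitVecs]

lemma card_unitVecs : #unitVecs = 6 := by decide

lemma sum_unitVecs {M : Type*} [AddCommMonoid M] (f : ℤ × ℤ → M) :
    ∑ m ∈ unitVecs, f m =
      f (1, 0) + f (-1, 0) + f (0, 1) + f (0, -1) + f (-1, 1) + f (1, -1) := by
  simp [unitVecs, add_assoc]

lemma one_le_dE {p q : ℕ} {x y : Pt} (hx : x ∈ LF p q) (hy : y ∈ LF p q) (hne : x ≠ y) :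
    1 ≤ dE x y := by
  obtain ⟨⟨a, b⟩, rfl⟩ := exists_eq_add_latVec hx hy
  have hab : (a, b) ≠ 0 := by rintro ⟨⟩; simp [latVec] at hne
  have hQ : 1 ≤ a ^ 2 + a * b + b ^ 2 := by
    by_contra! h
    have hb : b = 0 := by nlinarith [sq_nonneg (2 * a + b)]
    subst hb
    exact hab (Prod.ext (by simpa using h) rfl)
  rw [dE_add_latVec, Real.one_le_sqrt]
  exact_mod_cast hQ

lemma dE_add_latVec_eq_one_iff (x : Pt) (m : ℤ × ℤ) :
    dE x (x + latVec m) = 1 ↔ m ∈ unitVecs := by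
  rw [dE_add_latVec, Real.sqrt_eq_one, mem_unitVecs_iff]
  exact_mod_cast Iff.rfl

lemma card_filter_dE_eq_one {p q : ℕ} {D : Finset Pt} (hD : ↑D ⊆ LF p q) {x : Pt}
    (hx : x ∈ D) : #{y ∈ D | dE x y = 1} = #{m ∈ unitVecs | x + latVec m ∈ D} := by
  have himage : {y ∈ D | dE x y = 1} =
      {m ∈ unitVecs | x + latVec m ∈ D}.image (x + latVec ·) := by
    ext y
    simp only [mem_filter, mem_image]
    constructor
    · rintro ⟨hy, h1⟩
      obtain ⟨m, rfl⟩ := exists_eq_add_latVec (hD hx) (hD hy)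
      exact ⟨m, ⟨(dE_add_latVec_eq_one_iff x m).mp h1, hy⟩, rfl⟩
    · rintro ⟨m, ⟨hm, hy⟩, rfl⟩
      exact ⟨hy, (dE_add_latVec_eq_one_iff x m).mpr hm⟩
  rw [himage]
  exact card_image_of_injective _ ((add_right_injective x).comp latVec_injective)

end Lattice

section BrokenAlong

variable {G : Type*} [AddCommGroup G] [DecidableEq G]

def brokenAlong (D : Finset G) (v : G) : Finset G := {x ∈ D | x + v ∉ D}

/-- Each point of `T` is charged to the last atom of `D` on its ray in direction `v`; points of
one level lie on different rays. -/
lemma card_le_card_brokenAlong_of_level (h : G →+ ℝ) {D T : Finset G} {v : G} (hv : 0 < h v)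
    (hT : T ⊆ D) (hlevel : ∀ x ∈ T, ∀ y ∈ T, h x = h y) : #T ≤ #(brokenAlong D v) := by
  refine card_le_card_of_forall_subsingleton (fun x z => ∃ k : ℕ, z = x + k • v)
    (fun x hx => ?_) (fun z _ => ?_)
  · obtain ⟨z, hz, hmax⟩ := exists_max_image {z ∈ D | ∃ k : ℕ, z = x + k • v} h
      ⟨x, mem_filter.mpr ⟨hT hx, 0, by simp⟩⟩
    obtain ⟨hzD, k, rfl⟩ := mem_filter.mp hz
    refine ⟨x + k • v, mem_filter.mpr ⟨hzD, fun hnext => ?_⟩, k, rfl⟩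
    have := hmax _ (mem_filter.mpr ⟨hnext, k + 1, by rw [succ_nsmul, add_assoc]⟩)
    rw [map_add h] at this
    linarith
  · rintro x ⟨hx, k, rfl⟩ y ⟨hy, l, hxy⟩
    have hkl : k = l := by
      have := congrArg h hxy
      simp only [map_add, map_nsmul, hlevel x hx y hy, add_right_inj, nsmul_eq_mul] at this
      exact_mod_cast mul_right_cancel₀ hv.ne' this
    rw [hkl] at hxy
    exact add_right_cancel hxy

lemma two_mul_card_le_card_brokenAlong_add {D S : Finset G} {w d : G}
    (hS : S ⊆ brokenAlong D w) (hstep : ∀ x ∈ S, x + d ∈ D → x + d ∉ S ∧ x + d + w ∉ D) :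
    2 * #S ≤ #(brokenAlong D w) + #(brokenAlong D d) := by
  have hSD : S ⊆ D := hS.trans (filter_subset _ _)
  set S₁ := {x ∈ S | x + d ∈ D}
  set S₂ := {x ∈ S | x + d ∉ D}
  have hsplit : #S₁ + #S₂ = #S := card_filter_add_card_filter_not _
  have h₁ : #S + #S₁ ≤ #(brokenAlong D w) := by
    have hdisj : Disjoint S (S₁.image (· + d)) := by
      refine disjoint_left.mpr fun y hyS hy => ?_
      obtain ⟨x, hx, rfl⟩ := mem_image.mp hy
      obtain ⟨hxS, hxd⟩ := mem_filter.mp hx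
      exact (hstep x hxS hxd).1 hyS
    have hsub : S ∪ S₁.image (· + d) ⊆ brokenAlong D w := by
      refine union_subset hS fun y hy => ?_
      obtain ⟨x, hx, rfl⟩ := mem_image.mp hy
      obtain ⟨hxS, hxd⟩ := mem_filter.mp hx
      exact mem_filter.mpr ⟨hxd, (hstep x hxS hxd).2⟩
    have := card_le_card hsub
    rwa [card_union_of_disjoint hdisj, card_image_of_injective _ (add_left_injective d)] at this
  have h₂ : #S₂ ≤ #(brokenAlong D d) :=
    card_le_card fun x hx => mem_filter.mpr ⟨hSD (mem_filter.mp hx).1, (mem_filter.mp hx).2⟩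
  omega

end BrokenAlong

lemma EReal.coe_finset_sum {ι : Type*} (s : Finset ι) (f : ι → ℝ) :
    ((∑ i ∈ s, f i : ℝ) : EReal) = ∑ i ∈ s, (f i : EReal) :=
  map_sum (⟨⟨Real.toEReal, EReal.coe_zero⟩, EReal.coe_add⟩ : ℝ →+ EReal) f s

section Energy

def brokenBonds (D : Finset Pt) : ℕ := ∑ m ∈ unitVecs, #(brokenAlong D (latVec m))

def substrateAtoms (p q : ℕ) (D : Finset Pt) : Finset Pt := {x ∈ D | x ∈ bLFS p q}

variable {p q : ℕ} {D : Finset Pt}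

lemma brokenBonds_eq_sum :
    brokenBonds D = ∑ x ∈ D, #{m ∈ unitVecs | x + latVec m ∉ D} := by
  simp only [brokenBonds, brokenAlong, card_eq_sum_ones, sum_filter]
  rw [sum_comm]

lemma sum_card_neighbours_add_brokenBonds (hD : ↑D ⊆ LF p q) :
    ∑ x ∈ D, #{y ∈ D | dE x y = 1} + brokenBonds D = 6 * #D := by
  rw [brokenBonds_eq_sum, ← sum_add_distrib, sum_congr rfl fun x hx => by
    rw [card_filter_dE_eq_one hD hx, card_filter_add_card_filter_not, card_unitVecs]]
  rw [sum_const, smul_eq_mul, mul_comm]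

lemma card_bdry_le_brokenBonds (hD : ↑D ⊆ LF p q) : #(bdry D) ≤ brokenBonds D := by
  rw [brokenBonds_eq_sum, card_eq_sum_ones]
  calc ∑ x ∈ bdry D, 1 ≤ ∑ x ∈ bdry D, #{m ∈ unitVecs | x + latVec m ∉ D} := by
        refine sum_le_sum fun x hx => ?_
        obtain ⟨hxD, hlt⟩ := mem_filter.mp hx
        have := card_filter_add_card_filter_not (s := unitVecs) (p := fun m => x + latVec m ∈ D)
        rw [← card_filter_dE_eq_one hD hxD, card_unitVecs] at this
        omega
    _ ≤ _ := sum_le_sum_of_subset (filter_subset _ _)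

lemma sum_offDiag_vF (hD : ↑D ⊆ LF p q) (cF : ℝ) :
    ∑ e ∈ D.offDiag, vF cF (dE e.1 e.2) =
      ((-cF * (∑ x ∈ D, #{y ∈ D | dE x y = 1} : ℕ) : ℝ) : EReal) := by
  have hterm : ∀ e ∈ D.offDiag,
      vF cF (dE e.1 e.2) = ((if dE e.1 e.2 = 1 then -cF else 0 : ℝ) : EReal) := by
    intro e he
    obtain ⟨h1, h2, hne⟩ := mem_offDiag.mp he
    rw [vF, if_neg (one_le_dE (hD h1) (hD h2) hne).not_gt]
    split_ifs <;> simp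
  have hdiag : ∀ e ∈ D ×ˢ D, e ∉ D.offDiag →
      (if dE e.1 e.2 = 1 then -cF else 0 : ℝ) = 0 := by
    intro e he hoff
    have : e.1 = e.2 := by by_contra hne; simp_all [mem_offDiag]
    simp [this, dE]
  rw [sum_congr rfl hterm, ← EReal.coe_finset_sum,
    sum_subset (fun e he => by simp_all [mem_offDiag]) hdiag, sum_product, Nat.cast_sum, mul_sum]
  refine congrArg Real.toEReal (sum_congr rfl fun x _ => ?_)
  rw [← sum_filter, sum_const, nsmul_eq_mul, mul_comm]

lemma sum_v1 (cS : ℝ) :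
    ∑ x ∈ D, v1 cS p q x = -cS * #(substrateAtoms p q D) := by
  simp only [v1]
  rw [sum_ite, sum_const_zero, sum_const, nsmul_eq_mul, add_zero, mul_comm]
  rfl

lemma Vn_eq (hD : ↑D ⊆ LF p q) (cF cS : ℝ) :
    Vn cF cS p q D =
      ((cF * (brokenBonds D - 6 * #D : ℝ) - cS * #(substrateAtoms p q D) : ℝ) : EReal) := by
  have hbonds : (∑ x ∈ D, #{y ∈ D | dE x y = 1} : ℕ) = (6 * #D - brokenBonds D : ℝ) := by
    rw [eq_sub_iff_add_eq]
    exact_mod_cast sum_card_neighbours_add_brokenBonds hD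
  rw [Vn, sum_offDiag_vF hD, sum_v1, hbonds, ← EReal.coe_add]
  ring_nf

end Energy

section Substrate

variable {p q : ℕ} {D : Finset Pt}

lemma snd_eq_eS_of_mem_bLFS {x : Pt} (hx : x ∈ bLFS p q) : x.2 = eS p q := by
  obtain ⟨k, rfl⟩ := hx
  rfl

lemma dvd_of_mem_bLFS_of_add_latVec {x : Pt} {d : ℤ × ℤ} (hd : d.2 = 0) (hx : x ∈ bLFS p q)
    (hxd : x + latVec d ∈ bLFS p q) : (q : ℤ) ∣ d.1 := by
  obtain ⟨k, rfl⟩ := hx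
  obtain ⟨k', hk'⟩ := hxd
  have h := congrArg Prod.fst hk'
  simp only [Prod.fst_add, latVec_fst, hd, Int.cast_zero, zero_div, add_zero] at h
  exact ⟨k' - k, by exact_mod_cast (by linear_combination h : (d.1 : ℝ) = q * (k' - k))⟩

lemma notMem_of_snd_lt_eS (hD : ↑D ⊆ LF p q) {y : Pt} (hy : y.2 < eS p q) : y ∉ D :=
  fun hyD => (eS_le_snd (hD hyD)).not_gt hy

lemma substrateAtoms_subset_brokenAlong (hD : ↑D ⊆ LF p q) {w : ℤ × ℤ} (hw : w.2 < 0) :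
    substrateAtoms p q D ⊆ brokenAlong D (latVec w) := by
  intro x hx
  obtain ⟨hxD, hxS⟩ := mem_filter.mp hx
  refine mem_filter.mpr ⟨hxD, notMem_of_snd_lt_eS hD ?_⟩
  have : (w.2 : ℝ) < 0 := by exact_mod_cast hw
  simp only [Prod.snd_add, latVec_snd, snd_eq_eS_of_mem_bLFS hxS]
  nlinarith [(by positivity : (0:ℝ) < √3)]

lemma card_substrateAtoms_le_brokenAlong {v : ℤ × ℤ} (hv : 0 < v.2) :
    #(substrateAtoms p q D) ≤ #(brokenAlong D (latVec v)) :=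
  card_le_card_brokenAlong_of_level (AddMonoidHom.snd ℝ ℝ)
    (by simp only [AddMonoidHom.coe_snd, latVec_snd]; positivity) (filter_subset _ _)
    fun x hx y hy => by
      simp only [AddMonoidHom.coe_snd]
      rw [snd_eq_eS_of_mem_bLFS (mem_filter.mp hx).2, snd_eq_eS_of_mem_bLFS (mem_filter.mp hy).2]

lemma two_mul_card_substrateAtoms_le (hD : ↑D ⊆ LF p q) {w d : ℤ × ℤ} (hw : w.2 < 0)
    (hd : d.2 = 0) (hqd : ¬ (q : ℤ) ∣ d.1) :
    2 * #(substrateAtoms p q D) ≤ #(brokenAlong D (latVec w)) + #(brokenAlong D (latVec d)) := by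
  refine two_mul_card_le_card_brokenAlong_add (substrateAtoms_subset_brokenAlong hD hw)
    fun x hx hxd => ⟨fun hxdS => hqd ?_, notMem_of_snd_lt_eS hD ?_⟩
  · exact dvd_of_mem_bLFS_of_add_latVec hd (mem_filter.mp hx).2 (mem_filter.mp hxdS).2
  · have : (w.2 : ℝ) < 0 := by exact_mod_cast hw
    simp only [Prod.snd_add, latVec_snd, hd, snd_eq_eS_of_mem_bLFS (mem_filter.mp hx).2]
    push_cast
    nlinarith [(by positivity : (0:ℝ) < √3)]

lemma four_mul_card_substrateAtoms_le_brokenBonds (hD : ↑D ⊆ LF p q) :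
    4 * #(substrateAtoms p q D) ≤ brokenBonds D := by
  have h₁ := card_le_card (substrateAtoms_subset_brokenAlong hD (w := (0, -1)) (by norm_num))
  have h₂ := card_le_card (substrateAtoms_subset_brokenAlong hD (w := (1, -1)) (by norm_num))
  have h₃ : #(substrateAtoms p q D) ≤ #(brokenAlong D (latVec (0, 1))) :=
    card_substrateAtoms_le_brokenAlong (by norm_num)
  have h₄ : #(substrateAtoms p q D) ≤ #(brokenAlong D (latVec (-1, 1))) :=
    card_substrateAtoms_le_brokenAlong (by norm_num)
  rw [brokenBonds, sum_unitVecs]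
  omega

lemma six_mul_card_substrateAtoms_le_brokenBonds (hD : ↑D ⊆ LF p q) (hq : q ≠ 1) :
    6 * #(substrateAtoms p q D) ≤ brokenBonds D := by
  have hq' : ¬ (q : ℤ) ∣ 1 := by exact_mod_cast mt Nat.dvd_one.mp hq
  have h₁ := two_mul_card_substrateAtoms_le hD (w := (0, -1)) (d := (1, 0)) (by norm_num) rfl hq'
  have h₂ := two_mul_card_substrateAtoms_le hD (w := (1, -1)) (d := (-1, 0)) (by norm_num) rfl
    (by rwa [Int.dvd_neg])
  have h₃ : #(substrateAtoms p q D) ≤ #(brokenAlong D (latVec (0, 1))) :=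
    card_substrateAtoms_le_brokenAlong (by norm_num)
  have h₄ : #(substrateAtoms p q D) ≤ #(brokenAlong D (latVec (-1, 1))) :=
    card_substrateAtoms_le_brokenAlong (by norm_num)
  rw [brokenBonds, sum_unitVecs]
  omega

end Substrate

lemma deltaStrip_pos {cF cS : ℝ} {q : ℕ} (hdew : Dewetting cF cS q) :
    0 < DeltaStrip cF cS q := by
  unfold Dewetting at hdew
  unfold DeltaStrip
  split_ifs at hdew ⊢ <;> linarith

lemma cS_mul_card_substrateAtoms_le {cF cS : ℝ} {p q : ℕ} {D : Finset Pt} (hD : ↑D ⊆ LF p q)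
    (hdew : Dewetting cF cS q) :
    cS * #(substrateAtoms p q D) ≤ (cF - min (DeltaStrip cF cS q / 6) cF) * brokenBonds D := by
  set Δ := min (DeltaStrip cF cS q / 6) cF
  have hΔ : Δ ≤ cF := min_le_right _ _
  have hΔ6 : Δ ≤ DeltaStrip cF cS q / 6 := min_le_left _ _
  suffices ∃ k : ℝ, cS ≤ (cF - Δ) * k ∧ k * #(substrateAtoms p q D) ≤ brokenBonds D by
    obtain ⟨k, hk, hkS⟩ := this
    linarith [mul_le_mul_of_nonneg_right hk (Nat.cast_nonneg (#(substrateAtoms p q D))),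
      mul_le_mul_of_nonneg_left hkS (sub_nonneg.mpr hΔ)]
  have hpos := deltaStrip_pos hdew
  unfold Dewetting at hdew
  unfold DeltaStrip at hΔ6 hpos
  split_ifs at hdew hΔ6 hpos with hq
  · exact ⟨4, by linarith, by exact_mod_cast four_mul_card_substrateAtoms_le_brokenBonds hD⟩
  · exact ⟨6, by linarith, by exact_mod_cast six_mul_card_substrateAtoms_le_brokenBonds hD hq⟩

theorem energy_lower_bound_general
    (cF cS : ℝ) (hcF : 0 < cF)
    (p q : ℕ)
    (hdew : Dewetting cF cS q) :
    0 < min (DeltaStrip cF cS q / 6) cF ∧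
      ∀ n : ℕ, ∀ D ∈ Cn p q n,
        (((-6 * cF * (n : ℝ) +
            min (DeltaStrip cF cS q / 6) cF * ((bdry D).card : ℝ)) : ℝ) : EReal) ≤
          Vn cF cS p q D := by
  have hΔ : 0 < min (DeltaStrip cF cS q / 6) cF :=
    lt_min (by linarith [deltaStrip_pos hdew]) hcF
  refine ⟨hΔ, fun n D ⟨hD, hn⟩ => ?_⟩
  have hbdry : (#(bdry D) : ℝ) ≤ brokenBonds D := by exact_mod_cast card_bdry_le_brokenBonds hD
  have hsub := cS_mul_card_substrateAtoms_le hD hdew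
  rw [Vn_eq hD, EReal.coe_le_coe_iff, ← hn]
  linarith [mul_le_mul_of_nonneg_left hbdry hΔ.le]

/-- in the dewetting regime, `Δ := min{Δ_strip/6, c_F} > 0` and
`V_n(D_n) ≥ -6 c_F n + Δ #∂D_n` for every configuration. -/
theorem energy_lower_bound
    (cF cS : ℝ) (hcF : 0 < cF) (hcS : 0 < cS)
    (p q : ℕ) (hp : 0 < p) (hq : 0 < q) (hpq : Nat.Coprime p q)
    (hdew : Dewetting cF cS q) :
    0 < min (DeltaStrip cF cS q / 6) cF ∧
      ∀ n : ℕ, ∀ D ∈ Cn p q n,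
        (((-6 * cF * (n : ℝ) +
            min (DeltaStrip cF cS q / 6) cF * ((bdry D).card : ℝ)) : ℝ) : EReal) ≤
          Vn cF cS p q D :=
  energy_lower_bound_general cF cS hcF p q hdew
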